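/- arXiv:2109.13660 — 2 statements merged into one kernel-verified Lean document; each statement's English description precedes it below -/
import Mathlib

section
/- Let $q > 2$, $\alpha < q/2$, and let $T : \mathcal{H} \to L^q(X)$ be bounded. Then the following are equivalent (with comparable implicit constants): (i) for all $N$ and all orthonormal $f_1, \ldots, f_N \in \mathcal{H}$, $\int_X \big(\sum_{n=1}^N |Tf_n|^2\big)^{q/2} dx \lesssim N^\alpha$; (ii) for all $W \in L^{2q/(q-2)}(X)$, the operator $WT$ satisfies $\sup_N N^{-1/2 + (q-2\alpha)/(2q)} \big(\sum_{n=1}^N s_n(WT)^2\big)^{1/2} \lesssim \|W\|_{L^{2q/(q-2)}}$. -/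
open MeasureTheory
open scoped ENNReal

/-! Put `F = ∑ₙ |T fₙ|²`. Condition (i) bounds `‖F‖_{q/2}`, while (ii) bounds the pairing
`∫ |W|² F` by `‖|W|²‖_{q/(q-2)} = ‖W‖²_{2q/(q-2)}`, so the two are equivalent by the duality of
`L^{q/2}` and `L^{q/(q-2)}`. Hölder's inequality gives (i) ⇒ (ii). For (ii) ⇒ (i), test (ii)
against the extremal weight `W = F^{(q-2)/4}`, for which `∫ |W|² F = ∫ F^{q/2}` and
`‖W‖²_{2q/(q-2)} = (∫ F^{q/2})^{(q-2)/q}`; dividing is legitimate because `∫ F^{q/2} < ∞`, each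
`T fₙ` being in `L^q`. The powers of `N` match because `N^{2α/q}` is the `(2/q)`-th power of
`N^α`. -/

namespace ENNReal

theorem rpow_le_of_le_mul_rpow {a b : ℝ≥0∞} {s t : ℝ} (ha : a ≠ ∞) (ht : 0 < t)
    (hst : s + t = 1) (h : a ≤ b * a ^ s) : a ^ t ≤ b := by
  rcases eq_or_ne a 0 with rfl | ha0
  · simp [zero_rpow_of_pos ht]
  rwa [← ENNReal.mul_le_mul_iff_left (rpow_pos (pos_iff_ne_zero.2 ha0) ha).ne'
    (rpow_ne_top_of_ne_zero ha0 ha), ← rpow_add _ _ ha0 ha, add_comm, hst, rpow_one]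

theorem ofReal_rpow_neg_mul_le_iff {N : ℝ} (hN : 0 < N) (β : ℝ) {a b : ℝ≥0∞} :
    ENNReal.ofReal (N ^ (-β)) * a ≤ b ↔ a ≤ ENNReal.ofReal (N ^ β) * b := by
  have hNβ : 0 < N ^ β := Real.rpow_pos_of_pos hN β
  rw [Real.rpow_neg hN.le, ofReal_inv_of_pos hNβ]
  exact ENNReal.inv_mul_le_iff (ofReal_pos.2 hNβ).ne' ofReal_ne_top

theorem ofReal_mul_rpow_rpow {C N : ℝ} (hC : 0 ≤ C) (hN : 0 ≤ N) (α : ℝ) {p : ℝ} (hp : 0 ≤ p) :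
    ENNReal.ofReal (C * N ^ α) ^ p = ENNReal.ofReal (N ^ (α * p)) * ENNReal.ofReal (C ^ p) := by
  rw [ofReal_rpow_of_nonneg (by positivity) hp, Real.mul_rpow hC (by positivity),
    ← Real.rpow_mul hN, mul_comm, ofReal_mul (by positivity)]

end ENNReal

section Duality

variable {X : Type*} [MeasurableSpace X] {μ : Measure X} {q : ℝ}

theorem sq_eLpNorm_eq_lintegral_rpow_enorm {E : Type*} [NormedAddCommGroup E] (hq : 2 < q)
    (W : X → E) :
    eLpNorm W (ENNReal.ofReal (2 * q / (q - 2))) μ ^ 2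
      = (∫⁻ x, ‖W x‖ₑ ^ (2 * q / (q - 2)) ∂μ) ^ ((q - 2) / q) := by
  have hr : 0 < 2 * q / (q - 2) := div_pos (by linarith) (by linarith)
  rw [eLpNorm_eq_lintegral_rpow_enorm_toReal (by simpa using hr) ENNReal.ofReal_ne_top,
    ENNReal.toReal_ofReal hr.le, ← ENNReal.rpow_natCast, ← ENNReal.rpow_mul]
  congr 1
  have : q - 2 ≠ 0 := by linarith
  field_simp
  norm_num

theorem lintegral_ofReal_norm_sq_mul_le {E : Type*} [NormedAddCommGroup E] (hq : 2 < q)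
    {W : X → E} (hW : AEStronglyMeasurable W μ) {F : X → ℝ} (hF : AEMeasurable F μ) :
    ∫⁻ x, ENNReal.ofReal (‖W x‖ ^ 2 * F x) ∂μ
      ≤ eLpNorm W (ENNReal.ofReal (2 * q / (q - 2))) μ ^ 2 *
        (∫⁻ x, ENNReal.ofReal (F x) ^ (q / 2) ∂μ) ^ (2 / q) := by
  have hconj : (q / (q - 2)).HolderConjugate (q / 2) := by
    rw [Real.holderConjugate_iff, inv_div, inv_div]
    constructor
    · rw [lt_div_iff₀ (by linarith)]; linarith
    · have : q ≠ 0 := by linarith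
      field_simp
      ring
  have hsplit (x : X) :
      ENNReal.ofReal (‖W x‖ ^ 2 * F x) = ‖W x‖ₑ ^ (2 : ℝ) * ENNReal.ofReal (F x) := by
    rw [ENNReal.ofReal_mul (by positivity), ← ofReal_norm, ENNReal.ofReal_pow (norm_nonneg _),
      ENNReal.rpow_two]
  simp_rw [hsplit]
  refine (ENNReal.lintegral_mul_le_Lp_mul_Lq μ hconj (hW.enorm.pow_const 2)
    hF.ennreal_ofReal).trans_eq ?_
  rw [sq_eLpNorm_eq_lintegral_rpow_enorm hq, one_div_div, one_div_div]
  simp_rw [← ENNReal.rpow_mul, mul_div_assoc]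

theorem exists_memLp_lintegral_ofReal_norm_sq_mul_eq (hq : 2 < q) {F : X → ℝ} (hF0 : 0 ≤ F)
    (hF : AEMeasurable F μ) (hI : ∫⁻ x, ENNReal.ofReal (F x) ^ (q / 2) ∂μ ≠ ∞) :
    ∃ W : X → ℂ, MemLp W (ENNReal.ofReal (2 * q / (q - 2))) μ ∧
      ∫⁻ x, ENNReal.ofReal (‖W x‖ ^ 2 * F x) ∂μ = ∫⁻ x, ENNReal.ofReal (F x) ^ (q / 2) ∂μ ∧
      eLpNorm W (ENNReal.ofReal (2 * q / (q - 2))) μ ^ 2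
        = (∫⁻ x, ENNReal.ofReal (F x) ^ (q / 2) ∂μ) ^ ((q - 2) / q) := by
  have hq2 : q - 2 ≠ 0 := by linarith
  have hr : 0 < 2 * q / (q - 2) := div_pos (by linarith) (by linarith)
  set W : X → ℂ := fun x => ((F x ^ ((q - 2) / 4) : ℝ) : ℂ)
  have hW_norm (x : X) : ‖W x‖ = F x ^ ((q - 2) / 4) := by
    simp [W, abs_of_nonneg (Real.rpow_nonneg (hF0 x) _)]
  have hW_rpow (x : X) : ‖W x‖ₑ ^ (2 * q / (q - 2)) = ENNReal.ofReal (F x) ^ (q / 2) := by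
    rw [← ofReal_norm, hW_norm, ← ENNReal.ofReal_rpow_of_nonneg (hF0 x) (by linarith),
      ← ENNReal.rpow_mul]
    congr 1
    field_simp
    ring
  have hW_sq_mul (x : X) : ‖W x‖ ^ 2 * F x = F x ^ (q / 2) := by
    rw [hW_norm, ← Real.rpow_natCast, ← Real.rpow_mul (hF0 x),
      ← Real.rpow_add_one' (hF0 x) (by norm_num; linarith)]
    congr 1
    ring
  refine ⟨W, ⟨(Complex.measurable_ofReal.comp_aemeasurable
      (hF.pow_const _)).aestronglyMeasurable, ?_⟩, ?_, ?_⟩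
  · rw [eLpNorm_lt_top_iff_lintegral_rpow_enorm_lt_top (by simpa using hr) ENNReal.ofReal_ne_top,
      ENNReal.toReal_ofReal hr.le]
    simpa only [hW_rpow] using hI.lt_top
  · simp_rw [hW_sq_mul, ENNReal.ofReal_rpow_of_nonneg (hF0 _) (by linarith : 0 ≤ q / 2)]
  · simp_rw [sq_eLpNorm_eq_lintegral_rpow_enorm hq, hW_rpow]

theorem lintegral_ofReal_rpow_le_iff (hq : 2 < q) {F : X → ℝ} (hF0 : 0 ≤ F)
    (hF : AEMeasurable F μ) (hI : ∫⁻ x, ENNReal.ofReal (F x) ^ (q / 2) ∂μ ≠ ∞) (D : ℝ≥0∞) :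
    ∫⁻ x, ENNReal.ofReal (F x) ^ (q / 2) ∂μ ≤ D ↔
      ∀ W : X → ℂ, MemLp W (ENNReal.ofReal (2 * q / (q - 2))) μ →
        ∫⁻ x, ENNReal.ofReal (‖W x‖ ^ 2 * F x) ∂μ
          ≤ D ^ (2 / q) * eLpNorm W (ENNReal.ofReal (2 * q / (q - 2))) μ ^ 2 := by
  have hq0 : 0 < 2 / q := by positivity
  constructor
  · intro hI_le W hW
    calc ∫⁻ x, ENNReal.ofReal (‖W x‖ ^ 2 * F x) ∂μ
        ≤ eLpNorm W (ENNReal.ofReal (2 * q / (q - 2))) μ ^ 2 *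
            (∫⁻ x, ENNReal.ofReal (F x) ^ (q / 2) ∂μ) ^ (2 / q) :=
          lintegral_ofReal_norm_sq_mul_le hq hW.1 hF
      _ ≤ D ^ (2 / q) * eLpNorm W (ENNReal.ofReal (2 * q / (q - 2))) μ ^ 2 := by
          rw [mul_comm]; gcongr
  · intro hD
    obtain ⟨W, hW, hW_pairing, hW_norm⟩ :=
      exists_memLp_lintegral_ofReal_norm_sq_mul_eq hq hF0 hF hI
    have h := hD W hW
    rw [hW_pairing, hW_norm] at h
    refine (ENNReal.rpow_le_rpow_iff hq0).1 (ENNReal.rpow_le_of_le_mul_rpow hI hq0 ?_ h)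
    have : q ≠ 0 := by linarith
    field_simp
    ring

section SquareFunction

variable {E ι : Type*} [NormedAddCommGroup E] [Fintype ι] {g : ι → X → E}

theorem lintegral_ofReal_sum_norm_sq_rpow_ne_top (hq : 0 < q)
    (hg : ∀ n, MemLp (g n) (ENNReal.ofReal q) μ) :
    ∫⁻ x, ENNReal.ofReal (∑ n, ‖g n x‖ ^ 2) ^ (q / 2) ∂μ ≠ ∞ := by
  have hp : ENNReal.ofReal (q / 2) ≠ 0 := by simpa using hq
  have hsq (n : ι) : MemLp (fun x => ‖g n x‖ ^ 2) (ENNReal.ofReal (q / 2)) μ := by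
    simpa [ENNReal.ofReal_div_of_pos two_pos] using (hg n).norm_rpow_div 2
  have hsum := (memLp_finsetSum Finset.univ fun n _ => hsq n).eLpNorm_lt_top
  have hint := lintegral_rpow_enorm_lt_top_of_eLpNorm_lt_top hp ENNReal.ofReal_ne_top hsum
  rw [ENNReal.toReal_ofReal (by positivity)] at hint
  simp_rw [Real.enorm_of_nonneg (Finset.sum_nonneg fun n _ => sq_nonneg ‖g n _‖)] at hint
  exact hint.ne

theorem lintegral_ofReal_sum_norm_sq_rpow_le_iff (hq : 2 < q)
    (hg : ∀ n, MemLp (g n) (ENNReal.ofReal q) μ) (D : ℝ≥0∞) :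
    ∫⁻ x, ENNReal.ofReal (∑ n, ‖g n x‖ ^ 2) ^ (q / 2) ∂μ ≤ D ↔
      ∀ W : X → ℂ, MemLp W (ENNReal.ofReal (2 * q / (q - 2))) μ →
        ∑ n, ∫⁻ x, ENNReal.ofReal (‖W x‖ ^ 2 * ‖g n x‖ ^ 2) ∂μ
          ≤ D ^ (2 / q) * eLpNorm W (ENNReal.ofReal (2 * q / (q - 2))) μ ^ 2 := by
  have hsq_meas (n : ι) : AEMeasurable (fun x => ‖g n x‖ ^ 2) μ :=
    (hg n).1.norm.aemeasurable.pow_const 2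
  rw [lintegral_ofReal_rpow_le_iff hq (fun x => Finset.sum_nonneg fun n _ => sq_nonneg ‖g n x‖)
    (Finset.aemeasurable_fun_sum _ fun n _ => hsq_meas n)
    (lintegral_ofReal_sum_norm_sq_rpow_ne_top (by linarith) hg)]
  refine forall₂_congr fun W hW => ?_
  rw [← lintegral_finsetSum' (f := fun n x => ENNReal.ofReal (‖W x‖ ^ 2 * ‖g n x‖ ^ 2)) _
    fun n _ => ((hW.1.norm.aemeasurable.pow_const 2).mul (hsq_meas n)).ennreal_ofReal]
  have hdistrib (x : X) : ENNReal.ofReal (‖W x‖ ^ 2 * ∑ n, ‖g n x‖ ^ 2)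
      = ∑ n, ENNReal.ofReal (‖W x‖ ^ 2 * ‖g n x‖ ^ 2) := by
    rw [Finset.mul_sum, ENNReal.ofReal_sum_of_nonneg fun n _ => by positivity]
  simp_rw [hdistrib]

end SquareFunction

end Duality

theorem statement4_general
    {H : Type*} [NormedAddCommGroup H] [InnerProductSpace ℂ H]
    {X : Type*} [MeasurableSpace X] (μ : Measure X)
    (q α : ℝ) (hq : 2 < q) [Fact (1 ≤ ENNReal.ofReal q)]
    (T : H →L[ℂ] Lp ℂ (ENNReal.ofReal q) μ) :
    (∃ C : ℝ, 0 < C ∧ ∀ (N : ℕ) (f : Fin N → H), Orthonormal ℂ f →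
        ∫⁻ x, (ENNReal.ofReal (∑ n, ‖(T (f n) : X → ℂ) x‖ ^ 2)) ^ (q / 2) ∂μ
          ≤ ENNReal.ofReal (C * (N : ℝ) ^ α))
    ↔ (∃ C : ℝ, 0 < C ∧ ∀ W : X → ℂ, MemLp W (ENNReal.ofReal (2 * q / (q - 2))) μ →
        ∀ (N : ℕ), 1 ≤ N → ∀ f : Fin N → H, Orthonormal ℂ f →
          ENNReal.ofReal ((N : ℝ) ^ (-1 + (q - 2 * α) / q)) *
              ∑ n, ∫⁻ x, ENNReal.ofReal (‖W x‖ ^ 2 * ‖(T (f n) : X → ℂ) x‖ ^ 2) ∂μ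
            ≤ ENNReal.ofReal C * (eLpNorm W (ENNReal.ofReal (2 * q / (q - 2))) μ) ^ 2) := by
  have hq0 : q ≠ 0 := by linarith
  have hexp : -1 + (q - 2 * α) / q = -(α * (2 / q)) := by field_simp; ring
  have hdual (N : ℕ) (f : Fin N → H) :=
    lintegral_ofReal_sum_norm_sq_rpow_le_iff (g := fun n => (T (f n) : X → ℂ)) hq
      fun n => Lp.memLp _
  simp_rw [hexp]
  constructor
  · rintro ⟨C, hC, h⟩
    refine ⟨C ^ (2 / q), by positivity, fun W hW N hN f hf => ?_⟩
    have hN0 : (0 : ℝ) < N := by exact_mod_cast hN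
    rw [ENNReal.ofReal_rpow_neg_mul_le_iff hN0, ← mul_assoc,
      ← ENNReal.ofReal_mul_rpow_rpow hC.le hN0.le α (by positivity)]
    exact (hdual N f _).1 (h N f hf) W hW
  · rintro ⟨C, hC, h⟩
    refine ⟨C ^ (q / 2), by positivity, fun N f hf => ?_⟩
    rcases N.eq_zero_or_pos with rfl | hN
    · simp [ENNReal.zero_rpow_of_pos (by positivity : 0 < q / 2)]
    refine (hdual N f _).2 fun W hW => ?_
    rw [ENNReal.ofReal_mul_rpow_rpow (by positivity) (Nat.cast_nonneg N) α (by positivity),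
      ← Real.rpow_mul hC.le, show q / 2 * (2 / q) = 1 by field_simp, Real.rpow_one, mul_assoc,
      ← ENNReal.ofReal_rpow_neg_mul_le_iff (by exact_mod_cast hN)]
    exact h W hW N hN f hf

/-- duality. Let `q > 2`, `α < q/2`, `T : H → L^q(X)` bounded. The following
are equivalent: (i) for all orthonormal `f₁,…,f_N`, `∫ (∑|Tfₙ|²)^{q/2} ≤ C N^α`; (ii) for
all `W ∈ L^{2q/(q-2)}`, `N^{-1/2+(q-2α)/(2q)} (∑_{n=1}^N sₙ(WT)²)^{1/2} ≲ ‖W‖_{2q/(q-2)}`,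
where, by the variational principle, `∑_{n=1}^N sₙ(WT)²` is the supremum of
`∑ₙ ∫ |W|²|Tfₙ|²` over orthonormal `f₁,…,f_N`; here (ii) is stated in this (squared)
variational form. -/
theorem statement4
    {H : Type*} [NormedAddCommGroup H] [InnerProductSpace ℂ H] [CompleteSpace H]
    {X : Type*} [MeasurableSpace X] (μ : Measure X) [SigmaFinite μ]
    (q α : ℝ) (hq : 2 < q) (hα : α < q / 2) [Fact (1 ≤ ENNReal.ofReal q)]
    (T : H →L[ℂ] Lp ℂ (ENNReal.ofReal q) μ) :
    (∃ C : ℝ, 0 < C ∧ ∀ (N : ℕ) (f : Fin N → H), Orthonormal ℂ f →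
        ∫⁻ x, (ENNReal.ofReal (∑ n, ‖(T (f n) : X → ℂ) x‖ ^ 2)) ^ (q / 2) ∂μ
          ≤ ENNReal.ofReal (C * (N : ℝ) ^ α))
    ↔ (∃ C : ℝ, 0 < C ∧ ∀ W : X → ℂ, MemLp W (ENNReal.ofReal (2 * q / (q - 2))) μ →
        ∀ (N : ℕ), 1 ≤ N → ∀ f : Fin N → H, Orthonormal ℂ f →
          ENNReal.ofReal ((N : ℝ) ^ (-1 + (q - 2 * α) / q)) *
              ∑ n, ∫⁻ x, ENNReal.ofReal (‖W x‖ ^ 2 * ‖(T (f n) : X → ℂ) x‖ ^ 2) ∂μ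
            ≤ ENNReal.ofReal C * (eLpNorm W (ENNReal.ofReal (2 * q / (q - 2))) μ) ^ 2) :=
  statement4_general μ q α hq T
end

section
/- (Fefferman–de la Llave type identity) For $d \ge 1$ and $0 < \sigma < d$ there is a constant $c_{d,\sigma} > 0$ such that for all distinct $x, y \in \mathbb{R}^d$, $|x-y|^{-d+\sigma} = c_{d,\sigma} \int_{\mathbb{R}^d} \int_0^\infty \mathbb{1}_{B_r(a)}(x) \mathbb{1}_{B_r(a)}(y) \frac{dr}{r^{2d+1-\sigma}} \, da$. -/
open MeasureTheory
open scoped ENNReal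

open Metric Set Module

/-!
For `r > 0` both `x` and `y` lie in `B_r(a)` exactly when `r > max (|x - a|, |y - a|)`, so the
`r`-integral equals `max (|x - a|, |y - a|) ^ (-p) / p` with `p = 2d - σ`. The remaining integral
over `a` is invariant under translations and rotations of the pair `(x, y)` and scales like
`t ^ (d - p)` under `(x, y) ↦ (t x, t y)`; hence it is `|x - y| ^ (-d + σ)` times its value at
a pair of points at distance one, which is finite and positive because `p > d`.
-/

section RadialIntegral

variable {X : Type*} [PseudoMetricSpace X]

lemma indicator_ball_mul_indicator_ball (a x y : X) (r : ℝ) :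
    (ball a r).indicator (fun _ => (1 : ℝ)) x * (ball a r).indicator (fun _ => (1 : ℝ)) y
      = (Ioi (max (dist x a) (dist y a))).indicator (fun _ => 1) r := by
  simp only [indicator, mem_ball, mem_Ioi, max_lt_iff]
  split_ifs <;> simp_all

lemma integral_Ioi_indicator_ball_mul_indicator_ball_div_rpow {p : ℝ} (hp : 0 < p) {a x y : X}
    (hm : 0 < max (dist x a) (dist y a)) :
    ∫ r in Ioi (0 : ℝ), (ball a r).indicator (fun _ => (1 : ℝ)) x *
        (ball a r).indicator (fun _ => (1 : ℝ)) y / r ^ (p + 1)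
      = max (dist x a) (dist y a) ^ (-p) / p := by
  have hfun : (fun r : ℝ => (ball a r).indicator (fun _ => (1 : ℝ)) x *
        (ball a r).indicator (fun _ => (1 : ℝ)) y / r ^ (p + 1))
      = (Ioi (max (dist x a) (dist y a))).indicator (fun r => r ^ (-(p + 1))) := by
    funext r
    rw [indicator_ball_mul_indicator_ball]
    by_cases hr : max (dist x a) (dist y a) < r
    · simp only [indicator_of_mem (mem_Ioi.2 hr), one_div]
      rw [Real.rpow_neg (hm.trans hr).le]
    · simp [indicator_of_notMem (show r ∉ Ioi _ from hr)]
  rw [hfun, setIntegral_indicator measurableSet_Ioi, Ioi_inter_Ioi, sup_of_le_right hm.le,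
    integral_Ioi_rpow_of_lt (by linarith) hm, show -(p + 1) + 1 = -p by ring, neg_div_neg_eq]

lemma max_dist_pos {x y : X} (hxy : dist x y ≠ 0) (a : X) : 0 < max (dist x a) (dist y a) := by
  have := dist_triangle_right x y a
  have := (dist_nonneg : 0 ≤ dist x y).lt_of_ne' hxy
  have := le_max_left (dist x a) (dist y a)
  have := le_max_right (dist x a) (dist y a)
  linarith

end RadialIntegral

section MaxDistIntegral

variable {E : Type*} [NormedAddCommGroup E] [InnerProductSpace ℝ E] [FiniteDimensional ℝ E]
  [MeasurableSpace E] [BorelSpace E]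

noncomputable def maxDistIntegral (p : ℝ) (x y : E) : ℝ :=
  ∫ a, max (dist x a) (dist y a) ^ (-p)

variable {p : ℝ}

lemma maxDistIntegral_add_right (x y v : E) :
    maxDistIntegral p (x + v) (y + v) = maxDistIntegral p x y := by
  unfold maxDistIntegral
  rw [← integral_add_right_eq_self _ v]
  simp_rw [dist_add_right]

lemma maxDistIntegral_map_linearIsometryEquiv (L : E ≃ₗᵢ[ℝ] E) (x y : E) :
    maxDistIntegral p (L x) (L y) = maxDistIntegral p x y := by
  unfold maxDistIntegral
  rw [← integral_comp L]
  simp_rw [L.dist_map]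

lemma maxDistIntegral_smul {t : ℝ} (ht : 0 < t) (x y : E) :
    maxDistIntegral p (t • x) (t • y) = t ^ ((finrank ℝ E : ℝ) - p) * maxDistIntegral p x y := by
  have hscale : ∫ a, max (dist (t • x) (t • a)) (dist (t • y) (t • a)) ^ (-p)
      = t ^ (-p) * maxDistIntegral p x y := by
    simp_rw [dist_smul₀, Real.norm_of_nonneg ht.le, ← mul_max_of_nonneg _ _ ht.le,
      Real.mul_rpow ht.le (le_max_of_le_left dist_nonneg)]
    exact integral_const_mul _ _
  rw [Measure.integral_comp_smul volume (fun a => max (dist (t • x) a) (dist (t • y) a) ^ (-p)) t,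
    abs_inv, abs_of_pos (pow_pos ht _), smul_eq_mul, ← Real.rpow_natCast] at hscale
  change (t ^ (finrank ℝ E : ℝ))⁻¹ * maxDistIntegral p (t • x) (t • y) = _ at hscale
  rw [sub_eq_add_neg, Real.rpow_add ht, mul_assoc, ← hscale, ← mul_assoc,
    mul_inv_cancel₀ (by positivity), one_mul]

lemma maxDistIntegral_eq_dist_rpow_mul {e x y : E} (he : ‖e‖ = 1) (hxy : x ≠ y) :
    maxDistIntegral p x y = dist x y ^ ((finrank ℝ E : ℝ) - p) * maxDistIntegral p e 0 := by
  set t := dist x y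
  have ht : 0 < t := dist_pos.2 hxy
  have hnorm : ‖e‖ = ‖t⁻¹ • (x - y)‖ := by
    rw [he, norm_smul, ← dist_eq_norm, Real.norm_of_nonneg (inv_nonneg.2 ht.le),
      inv_mul_cancel₀ ht.ne']
  set L : E ≃ₗᵢ[ℝ] E := Submodule.reflection (ℝ ∙ (e - t⁻¹ • (x - y)))ᗮ
  have hx : t • L e + y = x := by
    rw [Submodule.reflection_sub hnorm, smul_smul, mul_inv_cancel₀ ht.ne', one_smul,
      sub_add_cancel]
  calc maxDistIntegral p x y = maxDistIntegral p (t • L e + y) (t • L 0 + y) := by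
        rw [hx, map_zero, smul_zero, zero_add]
    _ = t ^ ((finrank ℝ E : ℝ) - p) * maxDistIntegral p (L e) (L 0) := by
        rw [maxDistIntegral_add_right, maxDistIntegral_smul ht]
    _ = t ^ ((finrank ℝ E : ℝ) - p) * maxDistIntegral p e 0 := by
        rw [maxDistIntegral_map_linearIsometryEquiv]

lemma integrable_max_dist_rpow_neg {e : E} (he : ‖e‖ = 1) (hp : (finrank ℝ E : ℝ) < p) :
    Integrable fun a : E => max (dist e a) (dist 0 a) ^ (-p) := by
  have hp0 : 0 ≤ p := (Nat.cast_nonneg _).trans hp.le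
  have hbound (a : E) : max (dist e a) (dist 0 a) ^ (-p) ≤ 3 ^ p * (1 + ‖a‖) ^ (-p) := by
    have h1 : 1 - ‖a‖ ≤ dist e a := by simpa [he, dist_eq_norm] using norm_sub_norm_le e a
    have h3 : (1 + ‖a‖) / 3 ≤ max (dist e a) (dist 0 a) := by
      rw [dist_zero_left]
      have := le_max_left (dist e a) ‖a‖
      have := le_max_right (dist e a) ‖a‖
      linarith
    calc _ ≤ ((1 + ‖a‖) / 3) ^ (-p) :=
          Real.rpow_le_rpow_of_nonpos (by positivity) h3 (neg_nonpos.2 hp0)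
      _ = _ := by
          rw [Real.div_rpow (by positivity) (by norm_num), Real.rpow_neg (by norm_num : (0 : ℝ) ≤ 3),
            div_inv_eq_mul, mul_comm]
  have hmeas : Measurable fun a : E => max (dist e a) (dist 0 a) ^ (-p) :=
    ((measurable_const.dist measurable_id).max (measurable_const.dist measurable_id)).pow_const _
  refine ((integrable_one_add_norm hp).const_mul (3 ^ p)).mono' hmeas.aestronglyMeasurable
    (Filter.Eventually.of_forall fun a => ?_)
  rw [Real.norm_of_nonneg (Real.rpow_nonneg (le_max_of_le_left dist_nonneg) _)]
  exact hbound a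

lemma maxDistIntegral_pos {e : E} (he : ‖e‖ = 1) (hp : (finrank ℝ E : ℝ) < p) :
    0 < maxDistIntegral p e 0 := by
  have hpos : ∀ a : E, 0 < max (dist e a) (dist 0 a) := max_dist_pos (by simp [he])
  have hcont : Continuous fun a : E => max (dist e a) (dist 0 a) ^ (-p) :=
    ((continuous_const.dist continuous_id).max (continuous_const.dist continuous_id)).rpow_const
      fun a => Or.inl (hpos a).ne'
  exact integral_pos_of_integrable_nonneg_nonzero (x := 0) hcont (integrable_max_dist_rpow_neg he hp)
    (fun a => (Real.rpow_pos_of_pos (hpos a) _).le) (Real.rpow_pos_of_pos (hpos 0) _).ne'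

end MaxDistIntegral

theorem statement8_general (d : ℕ) (hd : 1 ≤ d) (σ : ℝ) (hσ : σ < d) :
    ∃ c : ℝ, 0 < c ∧
      ∀ x y : EuclideanSpace ℝ (Fin d), x ≠ y →
        ‖x - y‖ ^ (-(d : ℝ) + σ)
          = c * ∫ a : EuclideanSpace ℝ (Fin d), ∫ r in Set.Ioi (0 : ℝ),
              (Metric.ball a r).indicator (fun _ => (1 : ℝ)) x *
              (Metric.ball a r).indicator (fun _ => (1 : ℝ)) y /
              r ^ (2 * (d : ℝ) + 1 - σ) := by
  set E := EuclideanSpace ℝ (Fin d)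
  set p : ℝ := 2 * d - σ
  have hdim : (finrank ℝ E : ℝ) = d := by rw [finrank_euclideanSpace_fin]
  have hp : 0 < p := by linarith
  have : NeZero d := ⟨by omega⟩
  obtain ⟨e, he⟩ := exists_norm_eq E zero_le_one
  have hK := maxDistIntegral_pos (p := p) he (by rw [hdim]; linarith)
  refine ⟨p / maxDistIntegral p e 0, div_pos hp hK, fun x y hxy => ?_⟩
  have hinner (a : E) := integral_Ioi_indicator_ball_mul_indicator_ball_div_rpow hp
    (max_dist_pos (dist_ne_zero.2 hxy) a)
  rw [show 2 * (d : ℝ) + 1 - σ = p + 1 by ring]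
  simp_rw [hinner]
  rw [integral_div, ← maxDistIntegral, maxDistIntegral_eq_dist_rpow_mul he hxy, hdim,
    dist_eq_norm, show (d : ℝ) - p = -d + σ by ring]
  field_simp

/-- Fefferman–de la Llave type identity: for `0 < σ < d` there is
`c = c_{d,σ} > 0` such that for all distinct `x, y ∈ ℝ^d`,
`|x-y|^{-d+σ} = c ∫_{ℝ^d} ∫_0^∞ 1_{B_r(a)}(x) 1_{B_r(a)}(y) r^{-(2d+1-σ)} dr da`. -/
theorem statement8 (d : ℕ) (hd : 1 ≤ d) (σ : ℝ) (hσ0 : 0 < σ) (hσ : σ < d) :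
    ∃ c : ℝ, 0 < c ∧
      ∀ x y : EuclideanSpace ℝ (Fin d), x ≠ y →
        ‖x - y‖ ^ (-(d : ℝ) + σ)
          = c * ∫ a : EuclideanSpace ℝ (Fin d), ∫ r in Set.Ioi (0 : ℝ),
              (Metric.ball a r).indicator (fun _ => (1 : ℝ)) x *
              (Metric.ball a r).indicator (fun _ => (1 : ℝ)) y /
              r ^ (2 * (d : ℝ) + 1 - σ) :=
  statement8_general d hd σ hσ
end
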